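/- Let Y(j), j = 0,1,..., be random variables with |Y(j)| ≤ D, let (𝓕_{k,l}) be a family of σ-algebras increasing in the sense 𝓕_{k,l} ⊂ 𝓕_{k',l'} when k' ≤ k and l' ≥ l, define β(n) = sup_{j≥0} E|Y(j) − E(Y(j)|𝓕_{j−n,j+n})| and let α(n) be the α-mixing coefficient of the family (𝓕_{k,l}). Then for any integers 0 ≤ n₁ ≤ ... ≤ n_l < n_{l+1} ≤ ... ≤ n_m, with k = ⌊(n_{l+1} − n_l)/3⌋, one has |E∏_{i=1}^m Y(n_i) − E∏_{i=1}^l Y(n_i) · E∏_{i=l+1}^m Y(n_i)| ≤ 2(mβ(k) + 2α(k))·∏_{i=1}^m max(1, ‖Y(n_i)‖_∞). -/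

import Mathlib

/-!
Replace each factor `Y(nᵢ)` by its local version `Zᵢ = E[Y(nᵢ) | 𝓕_{nᵢ-k, nᵢ+k}]`. As every
factor is bounded by `cᵢ = max(1, ‖Y(nᵢ)‖_∞)`, telescoping shows that this moves the expectation
of a product of `r` factors by at most `r β(k) ∏ cᵢ`; for the whole product and the two blocks
this costs `2 m β(k) ∏ cᵢ`. Since `k` is a third of the gap, the two blocks of `Z`s are measurable
with respect to `𝓕_{-∞, n_l+k}` and `𝓕_{n_l+2k, ∞}`, so their covariance is at most
`4 α(k) ∏ cᵢ` by the covariance inequality `|Cov(ξ, η)| ≤ 4 ‖ξ‖_∞ ‖η‖_∞ α`. That inequality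
comes from conditioning twice: `|Cov(ξ, η)| ≤ ‖ξ‖_∞ E|E[η - Eη | 𝓐]| = ‖ξ‖_∞ Cov(s_A, η)`, where
`s_A = 2·1_A - 1` is the sign of `E[η - Eη | 𝓐]`; doing the same for `η` against `s_A` leaves
`Cov(s_A, s_B) = 4 (P(A ∩ B) - P(A) P(B))`.
-/

open MeasureTheory ProbabilityTheory Finset

lemma abs_prod_sub_prod_le {ι : Type*} (s : Finset ι) {f g c : ι → ℝ}
    (hc : ∀ i ∈ s, 1 ≤ c i) (hf : ∀ i ∈ s, |f i| ≤ c i) (hg : ∀ i ∈ s, |g i| ≤ c i) :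
    |∏ i ∈ s, f i - ∏ i ∈ s, g i| ≤ (∑ i ∈ s, |f i - g i|) * ∏ i ∈ s, c i := by
  induction s using Finset.cons_induction with
  | empty => simp
  | cons a s ha ih =>
    simp only [forall_mem_cons] at hc hf hg
    have hP : |∏ i ∈ s, f i| ≤ ∏ i ∈ s, c i := by
      rw [abs_prod]; exact prod_le_prod (fun i _ => abs_nonneg _) hf.2
    rw [prod_cons, prod_cons, prod_cons, sum_cons]
    calc |f a * ∏ i ∈ s, f i - g a * ∏ i ∈ s, g i|
        = |(f a - g a) * ∏ i ∈ s, f i + g a * (∏ i ∈ s, f i - ∏ i ∈ s, g i)| := by ring_nf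
      _ ≤ |f a - g a| * |∏ i ∈ s, f i| + |g a| * |∏ i ∈ s, f i - ∏ i ∈ s, g i| := by
        rw [← abs_mul, ← abs_mul]; exact abs_add_le _ _
      _ ≤ |f a - g a| * (c a * ∏ i ∈ s, c i)
            + c a * ((∑ i ∈ s, |f i - g i|) * ∏ i ∈ s, c i) := by
        gcongr
        · exact hP.trans (le_mul_of_one_le_left (zero_le_one.trans (one_le_prod hc.2)) hc.1)
        · exact zero_le_one.trans hc.1
        · exact hg.1
        · exact ih hc.2 hf.2 hg.2
      _ = (|f a - g a| + ∑ i ∈ s, |f i - g i|) * (c a * ∏ i ∈ s, c i) := by ring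

lemma abs_sub_mul_le_of_approx {P P₁ P₂ Q Q₁ Q₂ e e₁ e₂ δ b₁ b₂ : ℝ}
    (h : |P - Q| ≤ e) (h₁ : |P₁ - Q₁| ≤ e₁) (h₂ : |P₂ - Q₂| ≤ e₂) (hQ : |Q - Q₁ * Q₂| ≤ δ)
    (hb₁ : |P₁| ≤ b₁) (hb₂ : |Q₂| ≤ b₂) :
    |P - P₁ * P₂| ≤ e + δ + e₁ * b₂ + b₁ * e₂ := by
  have hsplit :
      P - P₁ * P₂ = (P - Q) + (Q - Q₁ * Q₂) + ((Q₁ - P₁) * Q₂ + P₁ * (Q₂ - P₂)) := by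
    ring
  have hprod : |(Q₁ - P₁) * Q₂ + P₁ * (Q₂ - P₂)| ≤ e₁ * b₂ + b₁ * e₂ := by
    refine (abs_add_le _ _).trans ?_
    rw [abs_mul, abs_mul, abs_sub_comm Q₁, abs_sub_comm Q₂]
    gcongr
    · exact (abs_nonneg _).trans h₁
    · exact (abs_nonneg _).trans hb₁
  rw [hsplit]
  linarith [abs_add_le (P - Q + (Q - Q₁ * Q₂)) ((Q₁ - P₁) * Q₂ + P₁ * (Q₂ - P₂)),
    abs_add_le (P - Q) (Q - Q₁ * Q₂)]

section Approximation

variable {Ω ι : Type*} {m₀ : MeasurableSpace Ω} {μ : Measure Ω}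

lemma ae_abs_prod_le {s : Finset ι} {f : ι → Ω → ℝ} {c : ι → ℝ}
    (hf : ∀ i ∈ s, ∀ᵐ ω ∂μ, |f i ω| ≤ c i) : ∀ᵐ ω ∂μ, |∏ i ∈ s, f i ω| ≤ ∏ i ∈ s, c i := by
  filter_upwards [(Filter.eventually_all_finset s).2 hf] with ω hω
  rw [abs_prod]
  exact prod_le_prod (fun i _ => abs_nonneg _) hω

lemma ae_abs_le_toReal_eLpNorm_top {f : Ω → ℝ} (hf : MemLp f ⊤ μ) :
    ∀ᵐ ω ∂μ, |f ω| ≤ (eLpNorm f ⊤ μ).toReal := by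
  rw [toReal_eLpNorm hf.aestronglyMeasurable]
  exact ae_le_lpNorm_exponent_top hf

lemma abs_integral_prod_le [IsProbabilityMeasure μ] {s : Finset ι} {f : ι → Ω → ℝ}
    {c : ι → ℝ} (hf : ∀ i ∈ s, ∀ᵐ ω ∂μ, |f i ω| ≤ c i) :
    |∫ ω, ∏ i ∈ s, f i ω ∂μ| ≤ ∏ i ∈ s, c i := by
  simpa using norm_integral_le_of_norm_le_const (μ := μ) (f := fun ω => ∏ i ∈ s, f i ω)
    (ae_abs_prod_le hf)

lemma abs_integral_prod_sub_integral_prod_le [IsFiniteMeasure μ] (s : Finset ι)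
    {f g : ι → Ω → ℝ} {c : ι → ℝ} (hc : ∀ i ∈ s, 1 ≤ c i)
    (hfm : ∀ i ∈ s, AEStronglyMeasurable (f i) μ) (hgm : ∀ i ∈ s, AEStronglyMeasurable (g i) μ)
    (hf : ∀ i ∈ s, ∀ᵐ ω ∂μ, |f i ω| ≤ c i) (hg : ∀ i ∈ s, ∀ᵐ ω ∂μ, |g i ω| ≤ c i) :
    |∫ ω, ∏ i ∈ s, f i ω ∂μ - ∫ ω, ∏ i ∈ s, g i ω ∂μ| ≤
      (∑ i ∈ s, ∫ ω, |f i ω - g i ω| ∂μ) * ∏ i ∈ s, c i := by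
  have hfi : Integrable (fun ω => ∏ i ∈ s, f i ω) μ :=
    .of_bound (s.aestronglyMeasurable_fun_prod hfm) _ (ae_abs_prod_le hf)
  have hgi : Integrable (fun ω => ∏ i ∈ s, g i ω) μ :=
    .of_bound (s.aestronglyMeasurable_fun_prod hgm) _ (ae_abs_prod_le hg)
  have hdiff : ∀ i ∈ s, Integrable (fun ω => |f i ω - g i ω|) μ := fun i hi =>
    (Integrable.of_bound (hfm i hi) _ (hf i hi)).sub (.of_bound (hgm i hi) _ (hg i hi)) |>.abs
  calc |∫ ω, ∏ i ∈ s, f i ω ∂μ - ∫ ω, ∏ i ∈ s, g i ω ∂μ|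
      = |∫ ω, (∏ i ∈ s, f i ω - ∏ i ∈ s, g i ω) ∂μ| := by rw [integral_sub hfi hgi]
    _ ≤ ∫ ω, |∏ i ∈ s, f i ω - ∏ i ∈ s, g i ω| ∂μ := abs_integral_le_integral_abs
    _ ≤ ∫ ω, (∑ i ∈ s, |f i ω - g i ω|) * ∏ i ∈ s, c i ∂μ := by
      refine integral_mono_of_nonneg (.of_forall fun _ => abs_nonneg _)
        ((integrable_finsetSum s hdiff).mul_const _) ?_
      filter_upwards [(Filter.eventually_all_finset s).2 hf,
        (Filter.eventually_all_finset s).2 hg] with ω hfω hgω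
      exact abs_prod_sub_prod_le s hc hfω hgω
    _ = (∑ i ∈ s, ∫ ω, |f i ω - g i ω| ∂μ) * ∏ i ∈ s, c i := by
      rw [integral_mul_const, integral_finsetSum s hdiff]

lemma stronglyMeasurable_prod_condExp {s : Finset ι} {f : ι → Ω → ℝ}
    {m : ι → MeasurableSpace Ω} {m' : MeasurableSpace Ω} (h : ∀ i ∈ s, m i ≤ m') :
    StronglyMeasurable[m'] (fun ω => ∏ i ∈ s, μ[f i|m i] ω) :=
  s.stronglyMeasurable_fun_prod fun i hi => stronglyMeasurable_condExp.mono (h i hi)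

end Approximation

section Mixing

variable {Ω : Type*} {m m₀ : MeasurableSpace Ω} {μ : Measure Ω} {X Y : Ω → ℝ} {a : ℝ}

noncomputable def signIndicator (A : Set Ω) : Ω → ℝ := fun ω => 2 * A.indicator 1 ω - 1

lemma abs_signIndicator_le_one (A : Set Ω) (ω : Ω) : |signIndicator A ω| ≤ 1 := by
  by_cases h : ω ∈ A <;> norm_num [signIndicator, h]

lemma signIndicator_mul_eq_abs {g : Ω → ℝ} (ω : Ω) :
    signIndicator {ω | 0 ≤ g ω} ω * g ω = |g ω| := by
  by_cases h : 0 ≤ g ω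
  · norm_num [signIndicator, h, abs_of_nonneg h]
  · simp [signIndicator, h, abs_of_neg (not_le.1 h)]

lemma stronglyMeasurable_signIndicator {A : Set Ω} (hA : MeasurableSet[m] A) :
    StronglyMeasurable[m] (signIndicator A) :=
  (((measurable_const.indicator hA).const_mul 2).sub_const 1).stronglyMeasurable

lemma integrable_signIndicator [IsFiniteMeasure μ] {A : Set Ω} (hA : MeasurableSet A) :
    Integrable (signIndicator A) μ :=
  ((integrable_const (1 : ℝ)).indicator hA |>.const_mul 2).sub (integrable_const 1)

lemma nonneg_of_ae_abs_le [NeZero μ] (h : ∀ᵐ ω ∂μ, |X ω| ≤ a) : 0 ≤ a :=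
  let ⟨_, hω⟩ := h.exists
  (abs_nonneg _).trans hω

lemma integral_mul_condExp_of_stronglyMeasurable [IsFiniteMeasure μ] (hm : m ≤ m₀)
    (hX : StronglyMeasurable[m] X) (hXb : ∀ᵐ ω ∂μ, |X ω| ≤ a) (hY : Integrable Y μ) :
    ∫ ω, X ω * μ[Y|m] ω ∂μ = ∫ ω, X ω * Y ω ∂μ := by
  have hXY : Integrable (X * Y) μ := hY.bdd_mul (hX.mono hm).aestronglyMeasurable hXb
  calc ∫ ω, X ω * μ[Y|m] ω ∂μ = ∫ ω, μ[X * Y|m] ω ∂μ :=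
        integral_congr_ae (condExp_mul_of_stronglyMeasurable_left hX hXY hY).symm
    _ = ∫ ω, X ω * Y ω ∂μ := integral_condExp hm

variable [IsProbabilityMeasure μ]

lemma covariance_signIndicator {A B : Set Ω} (hA : MeasurableSet A) (hB : MeasurableSet B) :
    cov[signIndicator A, signIndicator B; μ] = 4 * (μ.real (A ∩ B) - μ.real A * μ.real B) := by
  have hmem (C : Set Ω) (hC : MeasurableSet C) : MemLp (C.indicator (1 : Ω → ℝ)) 2 μ :=
    (memLp_top_const (1 : ℝ)).indicator (μ := μ) hC |>.mono_exponent le_top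
  have hint (C : Set Ω) (hC : MeasurableSet C) :
      Integrable (fun ω => 2 * C.indicator (1 : Ω → ℝ) ω) μ :=
    ((integrable_const (1 : ℝ)).indicator hC).const_mul 2
  unfold signIndicator
  simp only [covariance_sub_const_left (hint A hA), covariance_sub_const_right (hint B hB),
    covariance_const_mul_left, covariance_const_mul_right,
    covariance_eq_sub (hmem A hA) (hmem B hB), ← Set.inter_indicator_one,
    integral_indicator_one hA, integral_indicator_one hB, integral_indicator_one (hA.inter hB)]
  ring

lemma covariance_eq_integral_mul_sub (hX : AEStronglyMeasurable X μ)
    (hXb : ∀ᵐ ω ∂μ, |X ω| ≤ a) (hY : Integrable Y μ) :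
    cov[X, Y; μ] = ∫ ω, X ω * (Y ω - μ[Y]) ∂μ := by
  have hY' : Integrable (fun ω => Y ω - μ[Y]) μ := hY.sub (integrable_const _)
  simp only [covariance, sub_mul]
  rw [integral_sub (hY'.bdd_mul hX hXb) (hY'.const_mul _), integral_const_mul,
    integral_sub hY (integrable_const _), integral_const, probReal_univ]
  simp

lemma exists_abs_covariance_le_mul_covariance_signIndicator (hm : m ≤ m₀)
    (hX : StronglyMeasurable[m] X) (hXb : ∀ᵐ ω ∂μ, |X ω| ≤ a) (hY : Integrable Y μ) :
    ∃ A, MeasurableSet[m] A ∧ |cov[X, Y; μ]| ≤ a * cov[signIndicator A, Y; μ] := by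
  set g := μ[fun ω => Y ω - μ[Y]|m]
  have hA : MeasurableSet[m] {ω | 0 ≤ g ω} :=
    stronglyMeasurable_condExp.measurable measurableSet_Ici
  have hs := stronglyMeasurable_signIndicator hA
  have hsb : ∀ᵐ ω ∂μ, |signIndicator {ω | 0 ≤ g ω} ω| ≤ 1 :=
    .of_forall (abs_signIndicator_le_one _)
  have hY' : Integrable (fun ω => Y ω - μ[Y]) μ := hY.sub (integrable_const _)
  refine ⟨_, hA, ?_⟩
  rw [covariance_eq_integral_mul_sub (hX.mono hm).aestronglyMeasurable hXb hY,
    covariance_eq_integral_mul_sub (hs.mono hm).aestronglyMeasurable hsb hY,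
    ← integral_mul_condExp_of_stronglyMeasurable hm hX hXb hY',
    ← integral_mul_condExp_of_stronglyMeasurable hm hs hsb hY']
  calc |∫ ω, X ω * g ω ∂μ| ≤ ∫ ω, |X ω * g ω| ∂μ := abs_integral_le_integral_abs
    _ ≤ ∫ ω, a * |g ω| ∂μ := by
      refine integral_mono_of_nonneg (.of_forall fun _ => abs_nonneg _)
        (integrable_condExp.abs.const_mul a) ?_
      filter_upwards [hXb] with ω hω
      rw [abs_mul]
      exact mul_le_mul_of_nonneg_right hω (abs_nonneg _)
    _ = a * ∫ ω, signIndicator {ω | 0 ≤ g ω} ω * g ω ∂μ := by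
      simp only [integral_const_mul, signIndicator_mul_eq_abs]

theorem abs_covariance_le_of_mixing {mA mB : MeasurableSpace Ω} (hmA : mA ≤ m₀)
    (hmB : mB ≤ m₀) (hX : StronglyMeasurable[mA] X) (hY : StronglyMeasurable[mB] Y) {b α₀ : ℝ}
    (hXb : ∀ᵐ ω ∂μ, |X ω| ≤ a) (hYb : ∀ᵐ ω ∂μ, |Y ω| ≤ b)
    (hα : ∀ A B, MeasurableSet[mA] A → MeasurableSet[mB] B →
      |μ.real (A ∩ B) - μ.real A * μ.real B| ≤ α₀) :
    |cov[X, Y; μ]| ≤ 4 * a * b * α₀ := by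
  have ha := nonneg_of_ae_abs_le hXb
  have hb := nonneg_of_ae_abs_le hYb
  obtain ⟨A, hA, hXA⟩ := exists_abs_covariance_le_mul_covariance_signIndicator hmA hX hXb
    (.of_bound (hY.mono hmB).aestronglyMeasurable b hYb)
  obtain ⟨B, hB, hYB⟩ := exists_abs_covariance_le_mul_covariance_signIndicator hmB hY hYb
    (integrable_signIndicator (hmA _ hA))
  calc |cov[X, Y; μ]| ≤ a * cov[signIndicator A, Y; μ] := hXA
    _ ≤ a * |cov[Y, signIndicator A; μ]| := by
      rw [covariance_comm]; gcongr; exact le_abs_self _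
    _ ≤ a * (b * cov[signIndicator B, signIndicator A; μ]) := by gcongr
    _ = 4 * a * b * (μ.real (A ∩ B) - μ.real A * μ.real B) := by
      rw [covariance_comm, covariance_signIndicator (hmA _ hA) (hmB _ hB)]; ring
    _ ≤ 4 * a * b * α₀ := by
      gcongr; exact (le_abs_self _).trans (hα A B hA hB)

theorem abs_integral_mul_sub_le_of_mixing {mA mB : MeasurableSpace Ω} (hmA : mA ≤ m₀)
    (hmB : mB ≤ m₀) (hX : StronglyMeasurable[mA] X) (hY : StronglyMeasurable[mB] Y) {b α₀ : ℝ}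
    (hXb : ∀ᵐ ω ∂μ, |X ω| ≤ a) (hYb : ∀ᵐ ω ∂μ, |Y ω| ≤ b)
    (hα : ∀ A B, MeasurableSet[mA] A → MeasurableSet[mB] B →
      |μ.real (A ∩ B) - μ.real A * μ.real B| ≤ α₀) :
    |∫ ω, X ω * Y ω ∂μ - (∫ ω, X ω ∂μ) * ∫ ω, Y ω ∂μ| ≤ 4 * a * b * α₀ := by
  have hcov := covariance_eq_sub
    (memLp_top_of_bound (hX.mono hmA).aestronglyMeasurable a hXb |>.mono_exponent le_top)
    (memLp_top_of_bound (hY.mono hmB).aestronglyMeasurable b hYb |>.mono_exponent le_top)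
  simp only [Pi.mul_apply] at hcov
  rw [← hcov]
  exact abs_covariance_le_of_mixing hmA hmB hX hY hXb hYb hα

end Mixing

theorem splitting_lemma_general
    {Ω : Type*} {m0 : MeasurableSpace Ω} {μ : Measure Ω} [IsProbabilityMeasure μ]
    (F : WithBot ℤ → WithTop ℤ → MeasurableSpace Ω)
    (hFle : ∀ k l, F k l ≤ m0)
    (hFmono : ∀ (k k' : WithBot ℤ) (l l' : WithTop ℤ), k' ≤ k → l ≤ l' → F k l ≤ F k' l')
    (Y : ℕ → Ω → ℝ) (D : ℝ) (hYmeas : ∀ j, Measurable (Y j))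
    (hYb : ∀ j ω, |Y j ω| ≤ D)
    (α β : ℕ → ℝ)
    (hα : ∀ (k n : ℕ) (A B : Set Ω), MeasurableSet[F ⊥ (k : ℤ)] A →
      MeasurableSet[F ((k + n : ℕ) : ℤ) ⊤] B →
      |(μ (A ∩ B)).toReal - (μ A).toReal * (μ B).toReal| ≤ α n)
    (hβ : ∀ (j n : ℕ),
      ∫ ω, |Y j ω - (μ[Y j| F ((j : ℤ) - (n : ℤ)) ((j : ℤ) + (n : ℤ))]) ω| ∂μ ≤ β n)
    (ns : ℕ → ℕ) (hns : Monotone ns) (M l : ℕ) (hlM : l < M) :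
    |(∫ ω, ∏ i ∈ range M, Y (ns i) ω ∂μ) -
        (∫ ω, ∏ i ∈ range l, Y (ns i) ω ∂μ) * ∫ ω, ∏ i ∈ Ico l M, Y (ns i) ω ∂μ| ≤
      2 * (M * β ((ns l - ns (l - 1)) / 3) + 2 * α ((ns l - ns (l - 1)) / 3)) *
        ∏ i ∈ range M, max 1 (eLpNorm (Y (ns i)) ⊤ μ).toReal := by
  set k := (ns l - ns (l - 1)) / 3
  set c : ℕ → ℝ := fun i => max 1 (eLpNorm (Y (ns i)) ⊤ μ).toReal
  set G : ℕ → MeasurableSpace Ω := fun i => F ((ns i : ℤ) - (k : ℤ)) ((ns i : ℤ) + (k : ℤ))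
  set Z : ℕ → Ω → ℝ := fun i => μ[Y (ns i)|G i]
  have hYc (i : ℕ) : ∀ᵐ ω ∂μ, |Y (ns i) ω| ≤ c i :=
    (ae_abs_le_toReal_eLpNorm_top (memLp_top_of_bound (hYmeas _).aestronglyMeasurable D
      (.of_forall (hYb _)))).mono fun _ h => h.trans (le_max_right _ _)
  have hZc (i : ℕ) : ∀ᵐ ω ∂μ, |Z i ω| ≤ c i := ae_bdd_abs_condExp_of_ae_bdd_abs (hYc i)
  have happrox (s : Finset ℕ) :
      |∫ ω, ∏ i ∈ s, Y (ns i) ω ∂μ - ∫ ω, ∏ i ∈ s, Z i ω ∂μ| ≤ #s * β k * ∏ i ∈ s, c i := by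
    refine (abs_integral_prod_sub_integral_prod_le s (fun i _ => le_max_left _ _)
      (fun i _ => (hYmeas _).aestronglyMeasurable) (fun i _ => integrable_condExp.1)
      (fun i _ => hYc i) (fun i _ => hZc i)).trans ?_
    gcongr
    exact (sum_le_card_nsmul s _ _ fun i _ => hβ (ns i) k).trans_eq (nsmul_eq_mul _ _)
  have hgap : ns (l - 1) + 3 * k ≤ ns l := by have := hns (Nat.sub_le l 1); omega
  have hpast : ∀ i ∈ range l, G i ≤ F ⊥ ((ns (l - 1) + k : ℕ) : ℤ) := fun i hi => by
    have := hns (Nat.le_sub_one_of_lt (mem_range.1 hi))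
    exact hFmono _ _ _ _ bot_le (WithTop.coe_le_coe.2 (by push_cast; omega))
  have hfuture : ∀ i ∈ Ico l M, G i ≤ F ((ns (l - 1) + k + k : ℕ) : ℤ) ⊤ := fun i hi => by
    have := hns (mem_Ico.1 hi).1
    exact hFmono _ _ _ _ (WithBot.coe_le_coe.2 (by push_cast; omega)) le_top
  have hcov := abs_integral_mul_sub_le_of_mixing (hFle _ _) (hFle _ _)
    (stronglyMeasurable_prod_condExp hpast) (stronglyMeasurable_prod_condExp hfuture)
    (ae_abs_prod_le fun i _ => hZc i) (ae_abs_prod_le fun i _ => hZc i) (hα _ k)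
  simp only [prod_range_mul_prod_Ico _ hlM.le] at hcov
  refine (abs_sub_mul_le_of_approx (happrox _) (happrox _) (happrox _) hcov
    (abs_integral_prod_le fun i _ => hYc i) (abs_integral_prod_le fun i _ => hZc i)).trans_eq ?_
  rw [← prod_range_mul_prod_Ico c hlM.le, card_range, card_range, Nat.card_Ico,
    Nat.cast_sub hlM.le]
  ring

/-- Splitting Lemma 3.1: for bounded random variables `Y j` and a family of
σ-algebras `F k l` (with `k ∈ WithBot ℤ`, `l ∈ WithTop ℤ`) increasing in the sense
that `F k l ≤ F k' l'` whenever `k' ≤ k` and `l ≤ l'`, with α-mixing coefficient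
bounded by `α` and approximation coefficient bounded by `β`, the expectation of a
product splits up to an error controlled by `α` and `β` at the gap. -/
theorem splitting_lemma
    {Ω : Type*} {m0 : MeasurableSpace Ω} {μ : Measure Ω} [IsProbabilityMeasure μ]
    (F : WithBot ℤ → WithTop ℤ → MeasurableSpace Ω)
    (hFle : ∀ k l, F k l ≤ m0)
    (hFmono : ∀ (k k' : WithBot ℤ) (l l' : WithTop ℤ), k' ≤ k → l ≤ l' → F k l ≤ F k' l')
    (Y : ℕ → Ω → ℝ) (D : ℝ) (hYmeas : ∀ j, Measurable (Y j))
    (hYb : ∀ j ω, |Y j ω| ≤ D)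
    (α β : ℕ → ℝ)
    (hα : ∀ (k n : ℕ) (A B : Set Ω), MeasurableSet[F ⊥ (k : ℤ)] A →
      MeasurableSet[F ((k + n : ℕ) : ℤ) ⊤] B →
      |(μ (A ∩ B)).toReal - (μ A).toReal * (μ B).toReal| ≤ α n)
    (hβ : ∀ (j n : ℕ),
      ∫ ω, |Y j ω - (μ[Y j| F ((j : ℤ) - (n : ℤ)) ((j : ℤ) + (n : ℤ))]) ω| ∂μ ≤ β n)
    (ns : ℕ → ℕ) (hns : Monotone ns) (M l : ℕ) (hl : 1 ≤ l) (hlM : l < M)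
    (hgap : ns (l - 1) < ns l) :
    |(∫ ω, ∏ i ∈ range M, Y (ns i) ω ∂μ) -
        (∫ ω, ∏ i ∈ range l, Y (ns i) ω ∂μ) * ∫ ω, ∏ i ∈ Ico l M, Y (ns i) ω ∂μ| ≤
      2 * (M * β ((ns l - ns (l - 1)) / 3) + 2 * α ((ns l - ns (l - 1)) / 3)) *
        ∏ i ∈ range M, max 1 (eLpNorm (Y (ns i)) ⊤ μ).toReal :=
  splitting_lemma_general F hFle hFmono Y D hYmeas hYb α β hα hβ ns hns M l hlM
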